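/- arXiv:math/0501051 — 2 statements merged into one kernel-verified Lean document; each statement's English description precedes it below -/
import Mathlib

section
/- Every injective simplicial map of the Farey graph to itself is surjective on vertices. -/
/-- Coprime pairs of integers, the "homogeneous coordinates" of Farey vertices. -/
def CoprimePair : Type := {p : ℤ × ℤ // IsCoprime p.1 p.2}

/-- Two coprime pairs are identified when they agree up to an overall sign. -/
def fareySetoid : Setoid CoprimePair where
  r a b := a.val = b.val ∨ a.val = -b.val
  iseqv := by
    constructor
    · intro a; exact Or.inl rfl
    · rintro a b (h | h)
      · exact Or.inl h.symm
      · right; rw [h, neg_neg]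
    · rintro a b c (h | h) (h' | h')
      · exact Or.inl (h.trans h')
      · exact Or.inr (h.trans h')
      · right; rw [h, h']
      · left; rw [h, h', neg_neg]

/-- The vertex set of the Farey graph: coprime pairs of integers up to sign. -/
def Farey : Type := Quotient fareySetoid

/-- The class of a coprime pair in the Farey graph. -/
def Farey.mk (p : CoprimePair) : Farey := Quotient.mk fareySetoid p

/-- Adjacency in the Farey graph: `[(p,q)]` and `[(r,s)]` are adjacent iff `|ps - qr| = 1`. -/
def Farey.Adj (x y : Farey) : Prop :=
  ∃ p q : CoprimePair, x = Farey.mk p ∧ y = Farey.mk q ∧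
    |p.val.1 * q.val.2 - p.val.2 * q.val.1| = 1

/-!
Every oriented edge of the Farey graph is formed by the two rows of some `g ∈ SL(2, ℤ)`, and
the two triangles on that edge have as third vertices the first rows of `T * g` and `T⁻¹ * g`.
An injective simplicial map `φ` sends the two triangles on an edge to two distinct triangles on
the image edge, hence onto both of them. So if the edge of `g` is the image of an edge, so is the
edge of `T^{±1} * g`, and trivially that of `S^{±1} * g`, which swaps the rows. Since `S` and `T`
generate `SL(2, ℤ)` and some edge is an image edge, every edge is, and every vertex, being the
first row of some `g`, lies in the image of `φ`.
-/

open ModularGroup MatrixGroups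

namespace ModularGroup

variable (g : SL(2, ℤ))

lemma S_mul_apply_zero : (S * g) 0 = -g 1 := by
  ext j; simp [Matrix.vecMul, dotProduct]

lemma S_mul_apply_one : (S * g) 1 = g 0 := by
  ext j; simp [Matrix.vecMul, dotProduct]

lemma S_inv_mul_apply_zero : (S⁻¹ * g) 0 = g 1 := by
  ext j; simp [S_inv, Matrix.vecMul, dotProduct]

lemma S_inv_mul_apply_one : (S⁻¹ * g) 1 = -g 0 := by
  ext j; simp [S_inv, Matrix.vecMul, dotProduct]

lemma T_mul_apply_zero : (T * g) 0 = g 0 + g 1 := by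
  ext j; simp [Matrix.vecMul, dotProduct]

lemma T_inv_mul_apply_zero : (T⁻¹ * g) 0 = g 0 - g 1 := by
  ext j; simp [Matrix.vecMul, dotProduct, sub_eq_add_neg]

end ModularGroup

namespace Farey

lemma mk_eq_mk_iff {p q : CoprimePair} : mk p = mk q ↔ p.val = q.val ∨ p.val = -q.val :=
  Quotient.eq

lemma adj_mk_iff {p q : CoprimePair} :
    Adj (mk p) (mk q) ↔ |p.val.1 * q.val.2 - p.val.2 * q.val.1| = 1 := by
  refine ⟨?_, fun h => ⟨p, q, rfl, rfl, h⟩⟩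
  rintro ⟨p', q', hp, hq, h⟩
  rw [← h]
  rcases mk_eq_mk_iff.1 hp with hp | hp <;> rcases mk_eq_mk_iff.1 hq with hq | hq <;>
    simp only [hp, hq, Prod.fst_neg, Prod.snd_neg] <;>
    first | (ring_nf; done) | (rw [← abs_neg]; ring_nf)

def ofRow (g : SL(2, ℤ)) (i : Fin 2) : Farey := mk ⟨(g i 0, g i 1), g.isCoprime_row i⟩

lemma ofRow_eq_mk {g : SL(2, ℤ)} {i : Fin 2} {p : CoprimePair} (h : (g i 0, g i 1) = p.val) :
    ofRow g i = mk p :=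
  congrArg mk (Subtype.ext h)

lemma ofRow_eq_ofRow_iff {g h : SL(2, ℤ)} {i j : Fin 2} :
    ofRow g i = ofRow h j ↔ g i = h j ∨ g i = -h j := by
  refine mk_eq_mk_iff.trans ?_
  simp [Prod.ext_iff, funext_iff, Fin.forall_fin_two]

lemma adj_ofRow_iff {g h : SL(2, ℤ)} {i j : Fin 2} :
    Adj (ofRow g i) (ofRow h j) ↔ |g i 0 * h j 1 - g i 1 * h j 0| = 1 :=
  adj_mk_iff

lemma adj_ofRow (g : SL(2, ℤ)) : Adj (ofRow g 0) (ofRow g 1) := by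
  simp [adj_ofRow_iff, ← Matrix.det_fin_two, g.det_coe]

lemma exists_ofRow_zero_eq (x : Farey) : ∃ g : SL(2, ℤ), ofRow g 0 = x := by
  obtain ⟨⟨⟨a, b⟩, u, v, huv⟩, rfl⟩ := Quotient.exists_rep x
  exact ⟨⟨!![a, b; -v, u], by simp only [Matrix.det_fin_two_of]; linear_combination huv⟩,
    ofRow_eq_mk rfl⟩

lemma exists_ofRow_eq_of_adj {x y : Farey} (hxy : Adj x y) :
    ∃ g : SL(2, ℤ), ofRow g 0 = x ∧ ofRow g 1 = y := by
  obtain ⟨p, q, rfl, rfl, hpq⟩ := hxy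
  set ε := p.val.1 * q.val.2 - p.val.2 * q.val.1 with hε
  have hεε : ε * ε = 1 := by rw [← abs_mul_abs_self, hpq, one_mul]
  refine ⟨⟨!![p.val.1, p.val.2; ε * q.val.1, ε * q.val.2], ?_⟩, ofRow_eq_mk rfl, ?_⟩
  · simp only [Matrix.det_fin_two_of]
    linear_combination hεε - ε * hε
  · refine mk_eq_mk_iff.2 (((abs_eq zero_le_one).1 hpq).imp (fun h => ?_) fun h => ?_) <;>
      ext <;> simp [h]

lemma ofRow_T_mul_ne_ofRow_T_inv_mul (g : SL(2, ℤ)) : ofRow (T * g) 0 ≠ ofRow (T⁻¹ * g) 0 := by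
  have hdet : g 0 0 * g 1 1 - g 0 1 * g 1 0 = 1 := by rw [← Matrix.det_fin_two, g.det_coe]
  simp only [Ne, ofRow_eq_ofRow_iff, T_mul_apply_zero, T_inv_mul_apply_zero, funext_iff,
    Fin.forall_fin_two, Pi.add_apply, Pi.sub_apply, Pi.neg_apply]
  rintro (⟨h0, h1⟩ | ⟨h0, h1⟩)
  · rw [show g 1 0 = 0 by omega, show g 1 1 = 0 by omega] at hdet
    simp at hdet
  · rw [show g 0 0 = 0 by omega, show g 0 1 = 0 by omega] at hdet
    simp at hdet

lemma adj_ofRow_zero_and_adj_ofRow_one_iff (g : SL(2, ℤ)) (z : Farey) :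
    Adj (ofRow g 0) z ∧ Adj (ofRow g 1) z ↔ z = ofRow (T * g) 0 ∨ z = ofRow (T⁻¹ * g) 0 := by
  have hdet : g 0 0 * g 1 1 - g 0 1 * g 1 0 = 1 := by rw [← Matrix.det_fin_two, g.det_coe]
  obtain ⟨k, rfl⟩ := exists_ofRow_zero_eq z
  simp only [adj_ofRow_iff, ofRow_eq_ofRow_iff, T_mul_apply_zero, T_inv_mul_apply_zero,
    funext_iff, Fin.forall_fin_two, Pi.add_apply, Pi.sub_apply, Pi.neg_apply]
  constructor
  · rintro ⟨hs, ht⟩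
    -- Cramer's rule: the rows of `g` form a basis of `ℤ²`
    have hx : k 0 0 = (g 0 0 * k 0 1 - g 0 1 * k 0 0) * g 1 0
        - (g 1 0 * k 0 1 - g 1 1 * k 0 0) * g 0 0 := by
      linear_combination -k 0 0 * hdet
    have hy : k 0 1 = (g 0 0 * k 0 1 - g 0 1 * k 0 0) * g 1 1
        - (g 1 0 * k 0 1 - g 1 1 * k 0 0) * g 0 1 := by
      linear_combination -k 0 1 * hdet
    rcases (abs_eq zero_le_one).1 hs with hs | hs <;>
      rcases (abs_eq zero_le_one).1 ht with ht | ht <;> rw [hs, ht] at hx hy <;> omega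
  · rintro ((⟨h0, h1⟩ | ⟨h0, h1⟩) | ⟨h0, h1⟩ | ⟨h0, h1⟩) <;> rw [h0, h1] <;> refine ⟨?_, ?_⟩ <;>
      first
        | exact (abs_eq zero_le_one).2 (.inl (by linear_combination hdet))
        | exact (abs_eq zero_le_one).2 (.inr (by linear_combination -hdet))

lemma ofRow_S_mul_zero (g : SL(2, ℤ)) : ofRow (S * g) 0 = ofRow g 1 :=
  ofRow_eq_ofRow_iff.2 (.inr (S_mul_apply_zero g))

lemma ofRow_S_mul_one (g : SL(2, ℤ)) : ofRow (S * g) 1 = ofRow g 0 :=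
  ofRow_eq_ofRow_iff.2 (.inl (S_mul_apply_one g))

lemma ofRow_S_inv_mul_zero (g : SL(2, ℤ)) : ofRow (S⁻¹ * g) 0 = ofRow g 1 :=
  ofRow_eq_ofRow_iff.2 (.inl (S_inv_mul_apply_zero g))

lemma ofRow_S_inv_mul_one (g : SL(2, ℤ)) : ofRow (S⁻¹ * g) 1 = ofRow g 0 :=
  ofRow_eq_ofRow_iff.2 (.inr (S_inv_mul_apply_one g))

lemma ofRow_T_mul_one (g : SL(2, ℤ)) : ofRow (T * g) 1 = ofRow g 1 :=
  ofRow_eq_ofRow_iff.2 (.inl (T_mul_apply_one g))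

lemma ofRow_T_inv_mul_one (g : SL(2, ℤ)) : ofRow (T⁻¹ * g) 1 = ofRow g 1 :=
  ofRow_eq_ofRow_iff.2 (.inl (T_inv_mul_apply_one g))

def IsImageEdge (φ : Farey → Farey) (g : SL(2, ℤ)) : Prop :=
  ∃ h : SL(2, ℤ), φ (ofRow h 0) = ofRow g 0 ∧ φ (ofRow h 1) = ofRow g 1

namespace IsImageEdge

variable {φ : Farey → Farey} {g : SL(2, ℤ)}

lemma S_mul (hg : IsImageEdge φ g) : IsImageEdge φ (S * g) := by
  obtain ⟨h, h0, h1⟩ := hg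
  exact ⟨S * h, by rw [ofRow_S_mul_zero, ofRow_S_mul_zero, h1],
    by rw [ofRow_S_mul_one, ofRow_S_mul_one, h0]⟩

lemma S_inv_mul (hg : IsImageEdge φ g) : IsImageEdge φ (S⁻¹ * g) := by
  obtain ⟨h, h0, h1⟩ := hg
  exact ⟨S⁻¹ * h, by rw [ofRow_S_inv_mul_zero, ofRow_S_inv_mul_zero, h1],
    by rw [ofRow_S_inv_mul_one, ofRow_S_inv_mul_one, h0]⟩

lemma exists_of_adj_of_adj (hφinj : Function.Injective φ)
    (hφadj : ∀ x y : Farey, Adj x y → Adj (φ x) (φ y)) (hg : IsImageEdge φ g) {z : Farey}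
    (hz₀ : Adj (ofRow g 0) z) (hz₁ : Adj (ofRow g 1) z) :
    ∃ k : SL(2, ℤ), φ (ofRow k 0) = z ∧ φ (ofRow k 1) = ofRow g 1 := by
  obtain ⟨h, h0, h1⟩ := hg
  have apex_image (k : SL(2, ℤ)) (hk : k = T * h ∨ k = T⁻¹ * h) :
      φ (ofRow k 0) = ofRow (T * g) 0 ∨ φ (ofRow k 0) = ofRow (T⁻¹ * g) 0 := by
    obtain ⟨hk₀, hk₁⟩ := (adj_ofRow_zero_and_adj_ofRow_one_iff h (ofRow k 0)).2
      (hk.imp (congrArg (ofRow · 0)) (congrArg (ofRow · 0)))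
    rw [← adj_ofRow_zero_and_adj_ofRow_one_iff, ← h0, ← h1]
    exact ⟨hφadj _ _ hk₀, hφadj _ _ hk₁⟩
  have hne := hφinj.ne (ofRow_T_mul_ne_ofRow_T_inv_mul h)
  have hz := (adj_ofRow_zero_and_adj_ofRow_one_iff g z).1 ⟨hz₀, hz₁⟩
  have hT := apex_image _ (.inl rfl)
  have hT' := apex_image _ (.inr rfl)
  -- `φ` maps the two apexes over `h` injectively into the two apexes over `g`
  obtain hk | hk : φ (ofRow (T * h) 0) = z ∨ φ (ofRow (T⁻¹ * h) 0) = z := by grind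
  · exact ⟨T * h, hk, by rw [ofRow_T_mul_one, h1]⟩
  · exact ⟨T⁻¹ * h, hk, by rw [ofRow_T_inv_mul_one, h1]⟩

lemma T_mul (hφinj : Function.Injective φ) (hφadj : ∀ x y : Farey, Adj x y → Adj (φ x) (φ y))
    (hg : IsImageEdge φ g) : IsImageEdge φ (T * g) := by
  obtain ⟨hz₀, hz₁⟩ := (adj_ofRow_zero_and_adj_ofRow_one_iff g _).2 (.inl rfl)
  rw [IsImageEdge, ofRow_T_mul_one]
  exact hg.exists_of_adj_of_adj hφinj hφadj hz₀ hz₁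

lemma T_inv_mul (hφinj : Function.Injective φ)
    (hφadj : ∀ x y : Farey, Adj x y → Adj (φ x) (φ y))
    (hg : IsImageEdge φ g) : IsImageEdge φ (T⁻¹ * g) := by
  obtain ⟨hz₀, hz₁⟩ := (adj_ofRow_zero_and_adj_ofRow_one_iff g _).2 (.inr rfl)
  rw [IsImageEdge, ofRow_T_inv_mul_one]
  exact hg.exists_of_adj_of_adj hφinj hφadj hz₀ hz₁

lemma mul_left (hφinj : Function.Injective φ) (hφadj : ∀ x y : Farey, Adj x y → Adj (φ x) (φ y))
    (hg : IsImageEdge φ g) (k : SL(2, ℤ)) : IsImageEdge φ (k * g) := by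
  have hk : k ∈ Subgroup.closure {S, T} := SpecialLinearGroup.SL2Z_generators ▸ Subgroup.mem_top k
  induction hk using Subgroup.closure_induction_left with
  | one => rwa [one_mul]
  | mul_left x hx y _ ih =>
    rw [mul_assoc]
    rcases hx with rfl | rfl
    exacts [ih.S_mul, ih.T_mul hφinj hφadj]
  | inv_mul_cancel x hx y _ ih =>
    rw [mul_assoc]
    rcases hx with rfl | rfl
    exacts [ih.S_inv_mul, ih.T_inv_mul hφinj hφadj]

lemma of_injective (hφinj : Function.Injective φ)
    (hφadj : ∀ x y : Farey, Adj x y → Adj (φ x) (φ y)) (g : SL(2, ℤ)) : IsImageEdge φ g := by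
  obtain ⟨g₀, hg₀⟩ := exists_ofRow_eq_of_adj (hφadj _ _ (adj_ofRow 1))
  have himage : IsImageEdge φ g₀ := ⟨1, hg₀.1.symm, hg₀.2.symm⟩
  simpa using himage.mul_left hφinj hφadj (g * g₀⁻¹)

end IsImageEdge

end Farey

/-- Every injective simplicial map of the Farey graph to itself is
surjective on vertices. -/
theorem farey_injective_simplicial_map_surjective
    (φ : Farey → Farey)
    (hφinj : Function.Injective φ)
    (hφadj : ∀ x y : Farey, Farey.Adj x y → Farey.Adj (φ x) (φ y)) :
    Function.Surjective φ := by
  intro w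
  obtain ⟨g, rfl⟩ := Farey.exists_ofRow_zero_eq w
  obtain ⟨h, hh, -⟩ := Farey.IsImageEdge.of_injective hφinj hφadj g
  exact ⟨Farey.ofRow h 0, hh⟩
end

section
/- Let n ≥ 3 and let (t_{i,j})_{1 ≤ i < j ≤ n+1} be any family of integers. There is a unique group endomorphism ρ of the pure braid group P_{n+1} satisfying ρ(A_{i,j}) = A_{i,j} z^{t_{i,j}} for all 1 ≤ i < j ≤ n+1, and ρ is injective if and only if 1 + Σ_{i<j} t_{i,j} ≠ 0. -/
def braidRels (n : ℕ) : Set (FreeGroup (Fin n)) :=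
  {r | (∃ i j : Fin n, (i : ℕ) + 1 = (j : ℕ) ∧
          r = .of i * .of j * .of i * (.of j * .of i * .of j)⁻¹) ∨
       (∃ i j : Fin n, (i : ℕ) + 2 ≤ (j : ℕ) ∧
          r = .of i * .of j * (.of j * .of i)⁻¹)}

abbrev BraidGroup (n : ℕ) : Type := PresentedGroup (braidRels n)

def braidGen {n : ℕ} (i : Fin n) : BraidGroup n := PresentedGroup.of i

def fullTwist (n : ℕ) : BraidGroup n :=
  ((List.ofFn fun i : Fin n => braidGen i).prod) ^ (n + 1)

/-- The canonical surjection `B_{n+1} → S_{n+1}`, sending `σ_i` to the transposition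
`(i, i+1)`. -/
def braidToPerm (n : ℕ) : BraidGroup n →* Equiv.Perm (Fin (n + 1)) :=
  PresentedGroup.toGroup (f := fun i : Fin n => Equiv.swap i.castSucc i.succ) (by
    rintro r (⟨i, j, hij, rfl⟩ | ⟨i, j, hij, rfl⟩) <;>
      simp only [map_mul, map_inv, FreeGroup.lift_apply_of, mul_inv_eq_one]
    · -- braid relation
      set a := i.castSucc
      set b := i.succ
      set d := j.succ
      have hcb : j.castSucc = b := by
        simp only [Fin.ext_iff, Fin.coe_castSucc, Fin.val_succ, a, b] at *; omega
      rw [hcb]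
      have hab : a ≠ b := by simp [a, b, Fin.ext_iff]
      have had : a ≠ d := by simp [a, d, Fin.ext_iff]; omega
      have hdb : d ≠ b := by simp [d, b, Fin.ext_iff]; omega
      have hda : d ≠ a := had.symm
      calc Equiv.swap a b * Equiv.swap b d * Equiv.swap a b
          = Equiv.swap b a * Equiv.swap d b * Equiv.swap b a := by
            rw [Equiv.swap_comm a b, Equiv.swap_comm b d]
        _ = Equiv.swap a d := Equiv.swap_mul_swap_mul_swap hdb hda
        _ = Equiv.swap d a := Equiv.swap_comm a d
        _ = Equiv.swap b d * Equiv.swap a b * Equiv.swap b d :=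
            (Equiv.swap_mul_swap_mul_swap hab had).symm
    · -- commutation relation
      have hd : (Equiv.swap i.castSucc i.succ).Disjoint (Equiv.swap j.castSucc j.succ) := by
        intro x
        by_cases hx : x = i.castSucc ∨ x = i.succ
        · right
          apply Equiv.swap_apply_of_ne_of_ne <;>
            (rcases hx with hx | hx <;> subst hx <;> simp [Fin.ext_iff] <;> omega)
        · push_neg at hx
          left
          exact Equiv.swap_apply_of_ne_of_ne hx.1 hx.2
      exact hd.commute.eq)

/-- The pure braid group `P_{n+1}`: the kernel of the canonical surjection
`B_{n+1} → S_{n+1}`. -/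
def PureBraidGroup (n : ℕ) : Subgroup (BraidGroup n) := (braidToPerm n).ker

/-- The generator `σ_{k+1}` of the braid group, defined for a natural number index
(`1` when out of range). -/
def sgen (n : ℕ) (k : ℕ) : BraidGroup n :=
  if h : k < n then braidGen ⟨k, h⟩ else 1

/-- The word `σ_{b-1} σ_{b-2} ⋯ σ_{a+1}` (0-based indices) used to build the Artin
generators of the pure braid group. -/
def conjWord (n a b : ℕ) : BraidGroup n :=
  (((List.range' (a + 1) (b - 1 - a)).reverse).map (sgen n)).prod

/-- The Artin generator `A_{a,b} = (σ_{b-1} ⋯ σ_{a+1}) σ_a² (σ_{b-1} ⋯ σ_{a+1})⁻¹`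
of the pure braid group (0-based indices `a < b ≤ n`, corresponding to the classical
`A_{i,j}` with `i = a+1`, `j = b+1`). -/
def Agen (n a b : ℕ) : BraidGroup n :=
  conjWord n a b * (sgen n a) ^ 2 * (conjWord n a b)⁻¹

lemma braidToPerm_sgen_sq (n a : ℕ) : braidToPerm n (sgen n a) ^ 2 = 1 := by
  unfold sgen
  split
  · simp [braidGen, braidToPerm, sq, Equiv.swap_mul_self]
  · simp

lemma Agen_mem_ker (n a b : ℕ) : Agen n a b ∈ (braidToPerm n).ker := by
  rw [MonoidHom.mem_ker]
  unfold Agen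
  rw [map_mul, map_mul, map_inv, map_pow, braidToPerm_sgen_sq]
  group

/-- The Artin generator `A_{a,b}` as an element of the pure braid group. -/
def pureGen (n a b : ℕ) : ↥(PureBraidGroup n) :=
  ⟨Agen n a b, Agen_mem_ker n a b⟩

lemma fullTwist_mem_ker (n : ℕ) : fullTwist n ∈ (braidToPerm n).ker := by
  rw [MonoidHom.mem_ker]
  have hlist : List.ofFn (fun i : Fin n => Equiv.swap i.castSucc i.succ) =
      List.zipWith Equiv.swap (List.finRange (n + 1)) (List.finRange (n + 1)).tail := by
    apply List.ext_getElem
    · simp [Nat.min_def]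
    · intro k h1 h2
      simp only [List.getElem_ofFn, List.getElem_zipWith, List.getElem_tail,
        List.getElem_finRange]
      congr 1
  have hmap : braidToPerm n ((List.ofFn fun i : Fin n => braidGen i).prod) =
      (List.finRange (n + 1)).formPerm := by
    rw [map_list_prod, List.map_ofFn]
    have : ((braidToPerm n) ∘ fun i : Fin n => braidGen i) =
        fun i : Fin n => Equiv.swap i.castSucc i.succ := by
      funext i
      simp [braidGen, braidToPerm]
    rw [this, hlist]
    rfl
  have hpow : (List.finRange (n + 1)).formPerm ^ (n + 1) = 1 := by
    have h := List.formPerm_pow_length_eq_one_of_nodup (l := List.finRange (n + 1))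
      (List.nodup_finRange (n + 1))
    simpa using h
  unfold fullTwist
  rw [map_pow, hmap, hpow]

/-- The full twist `z` as an element of the pure braid group; it generates the center of
both `B_{n+1}` and `P_{n+1}`. -/
def pureTwist (n : ℕ) : ↥(PureBraidGroup n) :=
  ⟨fullTwist n, fullTwist_mem_ker n⟩


/-!
The endomorphism is the transvection `x ↦ x z^{φ x}` attached to the central element `z` and the
homomorphism `φ = Σ_{i<j} t_{ij} lk_{ij} : P_{n+1} → ℤ`. The linking numbers `lk_{ij}` come from
the homomorphism `B_{n+1} → ℤ^{(n+1)²} ⋊ S_{n+1}`, `σ_i ↦ (e_{i,i+1}, (i i+1))`: its first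
component restricts to a homomorphism on `P_{n+1}` sending `A_{ij}` to `e_{ij} + e_{ji}` and `z`
to the sum of all off-diagonal `e_{uv}`. So `φ A_{ij} = t_{ij}` and `φ z = Σ t_{ij}`, whence
`φ ∘ ρ = (1 + Σ t_{ij}) φ`: if the factor vanishes then `ρ z = 1` although `z ≠ 1`; otherwise
`ρ x = ρ y` gives `φ x = φ y`, hence `x = y`.

Uniqueness holds because the `A_{ij}` generate `P_{n+1}`. The subgroup they generate is normal
(by explicit formulas for `σ_k A_{ij} σ_k⁻¹`) and contains every `σ_k²`; modulo it, left
multiplication by `σ_k` takes a fixed normal-form lift of each permutation `p` to the lift of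
`(k k+1) p`, so every braid is congruent to the lift of its permutation, and a pure braid to `1`.
-/

open Multiplicative

section GroupLemmas

variable {G : Type*} [Group G]

lemma commute_conj_of_mul_eq {s s' w y : G} (hw : w * s' = s * w) (hy : Commute s' y) :
    Commute s (w * y * w⁻¹) := by
  have hw' : s' * w⁻¹ = w⁻¹ * s := by
    rw [eq_inv_mul_iff_mul_eq, ← mul_assoc, hw, mul_inv_cancel_right]
  calc s * (w * y * w⁻¹) = w * (s' * y) * w⁻¹ := by
        rw [← mul_assoc, ← mul_assoc, ← hw]; group
    _ = w * y * (s' * w⁻¹) := by rw [hy.eq]; group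
    _ = w * y * w⁻¹ * s := by rw [hw']; group

lemma conj_conj_of_commute {g w : G} (hc : Commute g w) (x : G) :
    g * (w * x * w⁻¹) * g⁻¹ = w * (g * x * g⁻¹) * w⁻¹ := by
  calc g * (w * x * w⁻¹) * g⁻¹ = (g * w) * x * (g * w)⁻¹ := by group
    _ = (w * g) * x * (w * g)⁻¹ := by rw [hc.eq]
    _ = w * (g * x * g⁻¹) * w⁻¹ := by group

variable {x y : G}

lemma conj_conj_sq_of_braid (h : x * y * x = y * x * y) :
    x * (y * x ^ 2 * y⁻¹) * x⁻¹ = y ^ 2 := by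
  rw [sq, sq]
  calc x * (y * (x * x) * y⁻¹) * x⁻¹ = (x * y * x) * x * y⁻¹ * x⁻¹ := by group
    _ = (y * x * y) * x * y⁻¹ * x⁻¹ := by rw [h]
    _ = y * (x * y * x) * y⁻¹ * x⁻¹ := by group
    _ = y * (y * x * y) * y⁻¹ * x⁻¹ := by rw [h]
    _ = y * y := by group

lemma conj_sq_of_braid (h : x * y * x = y * x * y) : x * y ^ 2 * x⁻¹ = y⁻¹ * x ^ 2 * y := by
  rw [sq, sq]
  calc x * (y * y) * x⁻¹ = y⁻¹ * ((y * x * y) * y) * x⁻¹ := by group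
    _ = y⁻¹ * ((x * y * x) * y) * x⁻¹ := by rw [h]
    _ = y⁻¹ * (x * (y * x * y)) * x⁻¹ := by group
    _ = y⁻¹ * (x * (x * y * x)) * x⁻¹ := by rw [h]
    _ = y⁻¹ * (x * x) * y := by group

end GroupLemmas

section Transvection

variable {G : Type*} [Group G] {z : G}

def transvection (hz : z ∈ Subgroup.center G) (φ : G →* Multiplicative ℤ) : G →* G where
  toFun x := x * z ^ (φ x).toAdd
  map_one' := by simp
  map_mul' x y := by
    have hzy : Commute (z ^ (φ x).toAdd) y := (Subgroup.mem_center_iff.mp (zpow_mem hz _) y).symm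
    rw [map_mul, toAdd_mul, zpow_add, mul_assoc x (z ^ _), ← mul_assoc (z ^ _) y, hzy.eq]
    group

variable (hz : z ∈ Subgroup.center G) (φ : G →* Multiplicative ℤ)

lemma transvection_apply (x : G) : transvection hz φ x = x * z ^ (φ x).toAdd := rfl

lemma toAdd_transvection (x : G) :
    (φ (transvection hz φ x)).toAdd = (φ x).toAdd * (1 + (φ z).toAdd) := by
  rw [transvection_apply, map_mul, map_zpow, toAdd_mul, toAdd_zpow, smul_eq_mul]
  ring

lemma transvection_injective_iff (hz₁ : z ≠ 1) :
    Function.Injective (transvection hz φ) ↔ 1 + (φ z).toAdd ≠ 0 := by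
  constructor
  · intro hinj hzero
    apply hz₁ (hinj _)
    rw [map_one, transvection_apply, ← zpow_one_add, hzero, zpow_zero]
  · intro hne x y hxy
    have hφ : (φ x).toAdd = (φ y).toAdd := by
      have := congrArg (fun g => (φ g).toAdd) hxy
      simp only [toAdd_transvection] at this
      exact mul_right_cancel₀ hne this
    rw [transvection_apply, transvection_apply, hφ] at hxy
    exact mul_right_cancel hxy

end Transvection

section MulAutArrow

variable {α M : Type*} [Monoid M]

lemma mulAutArrow_apply_prod (g : Equiv.Perm α) (f : α × α → M) (p : α × α) :
    mulAutArrow g f p = f (g⁻¹ p.1, g⁻¹ p.2) :=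
  rfl

lemma mulAutArrow_mulSingle [DecidableEq α] (g : Equiv.Perm α) (a b : α) (x : M) :
    mulAutArrow g (Pi.mulSingle (a, b) x) = Pi.mulSingle (g a, g b) x := by
  funext p
  simp only [mulAutArrow_apply_prod, Pi.mulSingle_apply, Prod.ext_iff, Equiv.Perm.inv_eq_iff_eq]

end MulAutArrow

section WeightedSum

variable {α : Type*} [Fintype α]

def weightedSum (w : α → ℤ) : (α → Multiplicative ℤ) →* Multiplicative ℤ where
  toFun f := ofAdd (∑ a, w a * (f a).toAdd)
  map_one' := by simp
  map_mul' f g := by simp [mul_add, Finset.sum_add_distrib]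

lemma weightedSum_mulSingle [DecidableEq α] (w : α → ℤ) (a : α) (x : Multiplicative ℤ) :
    weightedSum w (Pi.mulSingle a x) = ofAdd (w a * x.toAdd) := by
  change ofAdd (∑ b, w b * toAdd ((Pi.mulSingle a x : α → Multiplicative ℤ) b)) = _
  rw [Finset.sum_eq_single a (fun b _ hb => by rw [Pi.mulSingle_eq_of_ne hb, toAdd_one, mul_zero])
    (by simp), Pi.mulSingle_eq_same]

end WeightedSum

section Braids

variable {n : ℕ}

section Relations

lemma braidGen_eq_sgen (i : Fin n) : braidGen i = sgen n i := by
  rw [sgen, dif_pos i.isLt]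

lemma braidGroup_closure_induction {p : BraidGroup n → Prop} (one : p 1)
    (mul_left : ∀ (k : ℕ) (g : BraidGroup n), k < n → p g → p (sgen n k * g))
    (inv_mul_left : ∀ (k : ℕ) (g : BraidGroup n), k < n → p g → p ((sgen n k)⁻¹ * g))
    (g : BraidGroup n) : p g := by
  have hg : g ∈ Subgroup.closure (Set.range (braidGen : Fin n → BraidGroup n)) := by
    rw [show (braidGen : Fin n → BraidGroup n) = PresentedGroup.of from rfl,
      PresentedGroup.closure_range_of]
    trivial
  induction hg using Subgroup.closure_induction_left with
  | one => exact one
  | mul_left _ hx _ _ ih =>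
    obtain ⟨i, rfl⟩ := hx
    exact braidGen_eq_sgen i ▸ mul_left i _ i.isLt ih
  | inv_mul_cancel _ hx _ _ ih =>
    obtain ⟨i, rfl⟩ := hx
    exact braidGen_eq_sgen i ▸ inv_mul_left i _ i.isLt ih

lemma mk_braidRel_eq_one {r : FreeGroup (Fin n)} (hr : r ∈ braidRels n) :
    PresentedGroup.mk (braidRels n) r = 1 :=
  (QuotientGroup.eq_one_iff r).mpr (Subgroup.subset_normalClosure hr)

lemma sgen_braid {k : ℕ} (h : k + 1 < n) :
    sgen n k * sgen n (k + 1) * sgen n k = sgen n (k + 1) * sgen n k * sgen n (k + 1) := by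
  rw [sgen, sgen, dif_pos (by omega), dif_pos h]
  have hrel := mk_braidRel_eq_one (Or.inl ⟨⟨k, by omega⟩, ⟨k + 1, h⟩, rfl, rfl⟩)
  simp only [map_mul, map_inv, mul_inv_eq_one] at hrel
  exact hrel

lemma commute_sgen {i j : ℕ} (h : i + 2 ≤ j) : Commute (sgen n i) (sgen n j) := by
  by_cases hj : j < n
  · rw [sgen, sgen, dif_pos (by omega), dif_pos hj]
    have hrel := mk_braidRel_eq_one (Or.inr ⟨⟨i, by omega⟩, ⟨j, hj⟩, h, rfl⟩)
    simp only [map_mul, map_inv, mul_inv_eq_one] at hrel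
    exact hrel
  · rw [show sgen n j = 1 from dif_neg hj]
    exact Commute.one_right _

lemma braidToPerm_sgen {k : ℕ} (hk : k < n) :
    braidToPerm n (sgen n k) = Equiv.swap ⟨k, by omega⟩ ⟨k + 1, by omega⟩ := by
  rw [sgen, dif_pos hk, braidGen, braidToPerm, PresentedGroup.toGroup.of]
  rfl

lemma braidToPerm_sgen_apply_val {k : ℕ} (hk : k < n) (x : Fin (n + 1)) :
    (braidToPerm n (sgen n k) x : ℕ) =
      if (x : ℕ) = k then k + 1 else if (x : ℕ) = k + 1 then k else x := by
  rw [braidToPerm_sgen hk, Equiv.swap_apply_def]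
  split_ifs <;> simp_all [Fin.ext_iff]

end Relations

section Words

def ascWord (n i m : ℕ) : BraidGroup n := ((List.range' i (m - i)).map (sgen n)).prod

lemma ascWord_of_le {i m : ℕ} (h : m ≤ i) : ascWord n i m = 1 := by
  simp [ascWord, Nat.sub_eq_zero_of_le h]

lemma ascWord_eq_sgen_mul {i m : ℕ} (h : i < m) :
    ascWord n i m = sgen n i * ascWord n (i + 1) m := by
  rw [ascWord, ascWord, show m - i = m - (i + 1) + 1 by omega, List.range'_succ]
  simp

lemma ascWord_succ {i m : ℕ} (h : i ≤ m) : ascWord n i (m + 1) = ascWord n i m * sgen n m := by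
  rw [ascWord, ascWord, show m + 1 - i = m - i + 1 by omega, List.range'_concat]
  simp [show i + (m - i) = m by omega]

lemma ascWord_append {i c m : ℕ} (h₁ : i ≤ c) (h₂ : c ≤ m) :
    ascWord n i m = ascWord n i c * ascWord n c m := by
  have h := List.range'_append (s := i) (m := c - i) (n := m - c) (step := 1)
  rw [one_mul, show i + (c - i) = c by omega, show c - i + (m - c) = m - i by omega] at h
  rw [ascWord, ascWord, ascWord, ← List.prod_append, ← List.map_append, h]

lemma commute_sgen_ascWord {k i m : ℕ}
    (h : ∀ l, i ≤ l → l < m → Commute (sgen n k) (sgen n l)) :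
    Commute (sgen n k) (ascWord n i m) := by
  refine Commute.list_prod_right _ _ fun x hx => ?_
  simp only [List.mem_map, List.mem_range'_1] at hx
  obtain ⟨l, ⟨hl₁, hl₂⟩, rfl⟩ := hx
  exact h l hl₁ (by omega)

lemma sgen_succ_mul_ascWord {k i m : ℕ} (hik : i ≤ k) (hkm : k + 1 < m) (hkn : k + 1 < n) :
    sgen n (k + 1) * ascWord n i m = ascWord n i m * sgen n k := by
  have hsplit :
      ascWord n i m = ascWord n i k * (sgen n k * sgen n (k + 1)) * ascWord n (k + 2) m := by
    rw [ascWord_append (c := k) hik (by omega), ascWord_eq_sgen_mul (i := k) (by omega),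
      ascWord_eq_sgen_mul (i := k + 1) (by omega)]
    group
  have c₁ : Commute (sgen n (k + 1)) (ascWord n i k) :=
    commute_sgen_ascWord fun l _ hl => (commute_sgen (by omega)).symm
  have c₂ : Commute (sgen n k) (ascWord n (k + 2) m) :=
    commute_sgen_ascWord fun l hl _ => commute_sgen (by omega)
  rw [hsplit]
  calc sgen n (k + 1) * (ascWord n i k * (sgen n k * sgen n (k + 1)) * ascWord n (k + 2) m)
      = (sgen n (k + 1) * ascWord n i k) * (sgen n k * sgen n (k + 1)) *
          ascWord n (k + 2) m := by group
    _ = ascWord n i k * (sgen n k * sgen n (k + 1) * sgen n k) * ascWord n (k + 2) m := by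
        rw [c₁.eq, sgen_braid hkn]; group
    _ = _ := by rw [mul_assoc _ (ascWord n _ _), ← c₂.eq]; group

lemma ascWord_conj_sgen {i j : ℕ} (hij : i ≤ j) (hj : j < n) :
    ascWord n i j * sgen n j * (ascWord n i j)⁻¹ =
      (ascWord n (i + 1) (j + 1))⁻¹ * sgen n i * ascWord n (i + 1) (j + 1) := by
  induction j, hij using Nat.le_induction with
  | base => simp [ascWord_of_le]
  | succ j hij ih =>
    have hc : Commute (sgen n (j + 1)) (ascWord n i j) :=
      commute_sgen_ascWord fun l _ hl => (commute_sgen (by omega)).symm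
    have hbraid : sgen n j * sgen n (j + 1) * (sgen n j)⁻¹ =
        (sgen n (j + 1))⁻¹ * (sgen n j * sgen n (j + 1)) := by
      rw [eq_inv_mul_iff_mul_eq, ← mul_assoc, ← mul_assoc, ← sgen_braid hj]; group
    calc ascWord n i (j + 1) * sgen n (j + 1) * (ascWord n i (j + 1))⁻¹
        = ascWord n i j * (sgen n j * sgen n (j + 1) * (sgen n j)⁻¹) * (ascWord n i j)⁻¹ := by
          rw [ascWord_succ hij]; group
      _ = (ascWord n i j * (sgen n (j + 1))⁻¹) * sgen n j *
            (sgen n (j + 1) * (ascWord n i j)⁻¹) := by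
          rw [hbraid]; group
      _ = (sgen n (j + 1))⁻¹ * (ascWord n i j * sgen n j * (ascWord n i j)⁻¹) *
            sgen n (j + 1) := by
          rw [← hc.inv_left.eq, hc.inv_right.eq]; group
      _ = _ := by rw [ih (by omega), ascWord_succ (by omega : i + 1 ≤ j + 1)]; group

lemma braidToPerm_ascWord_apply {i m : ℕ} (him : i ≤ m) (hm : m ≤ n) (x : Fin (n + 1)) :
    (braidToPerm n (ascWord n i m) x : ℕ) =
      if (x : ℕ) = m then i else if i ≤ (x : ℕ) ∧ (x : ℕ) < m then x + 1 else x := by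
  induction m, him using Nat.le_induction generalizing x with
  | base =>
    rw [ascWord_of_le le_rfl, map_one, Equiv.Perm.one_apply]
    split_ifs <;> omega
  | succ m him ih =>
    rw [ascWord_succ him, map_mul, Equiv.Perm.mul_apply, braidToPerm_sgen (by omega),
      Equiv.swap_apply_def]
    split_ifs <;> rw [ih (by omega)] <;> simp only [Fin.ext_iff] at * <;> split_ifs <;>
      omega

lemma conjWord_of_le {a b : ℕ} (h : b ≤ a + 1) : conjWord n a b = 1 := by
  simp [conjWord, show b - 1 - a = 0 by omega]

lemma conjWord_succ {a b : ℕ} (h : a < b) : conjWord n a (b + 1) = sgen n b * conjWord n a b := by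
  rw [conjWord, conjWord, show b + 1 - 1 - a = b - 1 - a + 1 by omega, List.range'_concat,
    show a + 1 + 1 * (b - 1 - a) = b by omega]
  simp

lemma conjWord_eq_mul_sgen {a b : ℕ} (h : a + 1 < b) :
    conjWord n a b = conjWord n (a + 1) b * sgen n (a + 1) := by
  rw [conjWord, conjWord, show b - 1 - a = b - 1 - (a + 1) + 1 by omega, List.range'_succ]
  simp

lemma commute_sgen_conjWord {k a b : ℕ}
    (h : ∀ l, a < l → l < b → Commute (sgen n k) (sgen n l)) :
    Commute (sgen n k) (conjWord n a b) := by
  refine Commute.list_prod_right _ _ fun x hx => ?_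
  simp only [List.mem_map, List.mem_reverse, List.mem_range'_1] at hx
  obtain ⟨l, ⟨hl₁, hl₂⟩, rfl⟩ := hx
  exact h l (by omega) (by omega)

lemma conjWord_mul_sgen_succ {k a b : ℕ} (hak : a < k) (hkb : k + 1 < b) (hkn : k + 1 < n) :
    conjWord n a b * sgen n (k + 1) = sgen n k * conjWord n a b := by
  induction b, hkb using Nat.le_induction with
  | base =>
    have c : Commute (sgen n (k + 1)) (conjWord n a k) :=
      commute_sgen_conjWord fun l _ hl => (commute_sgen (by omega)).symm
    rw [conjWord_succ (by omega), conjWord_succ hak, mul_assoc, mul_assoc, ← c.eq]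
    simp only [← mul_assoc]
    rw [sgen_braid hkn]
  | succ b hb ih =>
    have c : Commute (sgen n k) (sgen n b) := commute_sgen (by omega)
    rw [conjWord_succ (by omega), mul_assoc, ih, ← mul_assoc, ← c.eq, mul_assoc]

end Words

section ArtinSubgroup

lemma Agen_self_succ (k : ℕ) : Agen n k (k + 1) = sgen n k ^ 2 := by
  rw [Agen, conjWord_of_le le_rfl]
  group

lemma Agen_succ_right {a b : ℕ} (h : a < b) :
    Agen n a (b + 1) = sgen n b * Agen n a b * (sgen n b)⁻¹ := by
  rw [Agen, Agen, conjWord_succ h]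
  group

lemma Agen_eq_conj_sgen_succ {a b : ℕ} (h : a + 1 < b) :
    Agen n a b = conjWord n (a + 1) b * (sgen n (a + 1) * sgen n a ^ 2 * (sgen n (a + 1))⁻¹) *
      (conjWord n (a + 1) b)⁻¹ := by
  rw [Agen, conjWord_eq_mul_sgen h]
  group

lemma commute_sgen_Agen {k a b : ℕ} (hab : a < b) (hb : b ≤ n)
    (h : k + 2 ≤ a ∨ k = a ∧ b = a + 1 ∨ a < k ∧ k + 1 < b ∨ b < k) :
    Commute (sgen n k) (Agen n a b) := by
  rcases h with h | ⟨rfl, rfl⟩ | h | h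
  · exact commute_conj_of_mul_eq
      (commute_sgen_conjWord fun l _ _ => commute_sgen (by omega)).eq.symm
      ((commute_sgen h).pow_right 2)
  · exact commute_conj_of_mul_eq (by simp [conjWord_of_le]) ((Commute.refl _).pow_right 2)
  · exact commute_conj_of_mul_eq (conjWord_mul_sgen_succ h.1 h.2 (by omega))
      ((commute_sgen (by omega)).symm.pow_right 2)
  · exact commute_conj_of_mul_eq
      (commute_sgen_conjWord fun l _ _ => (commute_sgen (by omega)).symm).eq.symm
      ((commute_sgen (by omega)).symm.pow_right 2)

lemma sgen_conj_Agen_left {a b : ℕ} (hab : a + 1 < b) (hb : b ≤ n) :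
    sgen n a * Agen n a b * (sgen n a)⁻¹ = Agen n (a + 1) b := by
  have hc : Commute (sgen n a) (conjWord n (a + 1) b) :=
    commute_sgen_conjWord fun l _ _ => commute_sgen (by omega)
  rw [Agen_eq_conj_sgen_succ hab, conj_conj_of_commute hc,
    conj_conj_sq_of_braid (sgen_braid (by omega)), Agen]

lemma sgen_conj_Agen_pred_left {k b : ℕ} (hkb : k + 1 < b) (hb : b ≤ n) :
    sgen n k * Agen n (k + 1) b * (sgen n k)⁻¹ =
      (Agen n (k + 1) b)⁻¹ * Agen n k b * Agen n (k + 1) b := by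
  have hc : Commute (sgen n k) (conjWord n (k + 1) b) :=
    commute_sgen_conjWord fun l _ _ => commute_sgen (by omega)
  rw [Agen, conj_conj_of_commute hc, conj_sq_of_braid (sgen_braid (by omega)),
    Agen_eq_conj_sgen_succ hkb]
  simp only [sq]
  group

variable (n) in
def artinSubgroup : Subgroup (BraidGroup n) :=
  Subgroup.closure {g | ∃ a b, a < b ∧ b ≤ n ∧ Agen n a b = g}

lemma Agen_mem_artinSubgroup {a b : ℕ} (hab : a < b) (hb : b ≤ n) :
    Agen n a b ∈ artinSubgroup n :=
  Subgroup.subset_closure ⟨a, b, hab, hb, rfl⟩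

lemma sgen_sq_mem_artinSubgroup {k : ℕ} (hk : k < n) : sgen n k ^ 2 ∈ artinSubgroup n :=
  Agen_self_succ (n := n) k ▸ Agen_mem_artinSubgroup (by omega) (by omega)

lemma sgen_conj_Agen_mem_artinSubgroup {k a b : ℕ} (hk : k < n) (hab : a < b) (hb : b ≤ n) :
    sgen n k * Agen n a b * (sgen n k)⁻¹ ∈ artinSubgroup n := by
  have mem {a b : ℕ} (hab : a < b) (hb : b ≤ n) := Agen_mem_artinSubgroup (n := n) hab hb
  obtain h | rfl | ⟨rfl, hab'⟩ | rfl | ⟨hak, rfl⟩ :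
      (k + 2 ≤ a ∨ k = a ∧ b = a + 1 ∨ a < k ∧ k + 1 < b ∨ b < k) ∨ k + 1 = a ∨
        k = a ∧ a + 1 < b ∨ k = b ∨ a < k ∧ b = k + 1 := by omega
  · rw [(commute_sgen_Agen hab hb h).eq, mul_inv_cancel_right]
    exact mem hab hb
  · rw [sgen_conj_Agen_pred_left hab hb]
    exact mul_mem (mul_mem (inv_mem (mem hab hb)) (mem (by omega) hb)) (mem hab hb)
  · rw [sgen_conj_Agen_left hab' hb]
    exact mem hab' hb
  · rw [← Agen_succ_right hab]
    exact mem (by omega) (by omega)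
  · rw [Agen_succ_right hak,
      show ∀ x, sgen n k * (sgen n k * x * (sgen n k)⁻¹) * (sgen n k)⁻¹ =
        sgen n k ^ 2 * x * (sgen n k ^ 2)⁻¹ from fun x => by rw [sq]; group]
    exact mul_mem (mul_mem (sgen_sq_mem_artinSubgroup hk) (mem hak (by omega)))
      (inv_mem (sgen_sq_mem_artinSubgroup hk))

lemma sgen_conj_mem_artinSubgroup {k : ℕ} (hk : k < n) {x : BraidGroup n}
    (hx : x ∈ artinSubgroup n) : sgen n k * x * (sgen n k)⁻¹ ∈ artinSubgroup n := by
  induction hx using Subgroup.closure_induction with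
  | mem x hx =>
    obtain ⟨a, b, hab, hb, rfl⟩ := hx
    exact sgen_conj_Agen_mem_artinSubgroup hk hab hb
  | one => simp
  | mul x y _ _ hx hy =>
    simpa only [mul_assoc, inv_mul_cancel_left] using mul_mem hx hy
  | inv x _ hx => simpa only [mul_inv_rev, inv_inv, mul_assoc] using inv_mem hx

instance artinSubgroup_normal : (artinSubgroup n).Normal := by
  suffices ∀ g x, x ∈ artinSubgroup n → g * x * g⁻¹ ∈ artinSubgroup n from
    ⟨fun x hx g => this g x hx⟩
  intro g
  induction g using braidGroup_closure_induction with
  | one => simp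
  | mul_left k g hk ih =>
    intro x hx
    simpa only [mul_inv_rev, mul_assoc] using sgen_conj_mem_artinSubgroup hk (ih x hx)
  | inv_mul_left k g hk ih =>
    intro x hx
    have hsq := sgen_sq_mem_artinSubgroup hk
    have h := mul_mem (mul_mem (inv_mem hsq) (sgen_conj_mem_artinSubgroup hk (ih x hx))) hsq
    convert h using 1
    rw [sq]
    group

lemma artinSubgroup_le_pureBraidGroup : artinSubgroup n ≤ PureBraidGroup n := by
  rw [artinSubgroup, Subgroup.closure_le]
  rintro _ ⟨a, b, -, -, rfl⟩
  exact Agen_mem_ker n a b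

end ArtinSubgroup

section NormalForm

variable (n) in
/-- A normal-form lift of `p` when `p` fixes every point above `m`: an ascending word whose
permutation sends `m` to `p m`, followed by the lift of the remaining permutation, which fixes
`m`. -/
def permSection : ℕ → Equiv.Perm (Fin (n + 1)) → BraidGroup n
  | 0, _ => 1
  | m + 1, p =>
    ascWord n (p (Fin.ofNat (n + 1) (m + 1))) (m + 1) *
      permSection m ((braidToPerm n (ascWord n (p (Fin.ofNat (n + 1) (m + 1))) (m + 1)))⁻¹ * p)

lemma permSection_succ {m j : ℕ} {p : Equiv.Perm (Fin (n + 1))}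
    (hj : (p (Fin.ofNat (n + 1) (m + 1)) : ℕ) = j) :
    permSection n (m + 1) p =
      ascWord n j (m + 1) * permSection n m ((braidToPerm n (ascWord n j (m + 1)))⁻¹ * p) := by
  subst hj
  rfl

lemma val_ofNat_succ {m : ℕ} (hm : m < n) : (Fin.ofNat (n + 1) (m + 1) : ℕ) = m + 1 := by
  rw [Fin.val_ofNat, Nat.mod_eq_of_lt (by omega)]

lemma permSection_one : ∀ m ≤ n, permSection n m 1 = 1
  | 0, _ => rfl
  | m + 1, hm => by
    rw [permSection_succ (j := m + 1) (val_ofNat_succ hm), ascWord_of_le le_rfl, map_one, inv_one,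
      one_mul, one_mul, permSection_one m (by omega)]

lemma val_apply_le_of_forall_gt {m : ℕ} {p : Equiv.Perm (Fin (n + 1))}
    (hp : ∀ x : Fin (n + 1), m < (x : ℕ) → p x = x) {x : Fin (n + 1)} (hx : (x : ℕ) ≤ m) :
    (p x : ℕ) ≤ m := by
  by_contra h
  have := congrArg Fin.val (p.injective (hp (p x) (by omega)))
  omega

lemma inv_braidToPerm_ascWord_mul_apply {m : ℕ} (hm : m < n) {p : Equiv.Perm (Fin (n + 1))}
    (hp : ∀ x : Fin (n + 1), m + 1 < (x : ℕ) → p x = x) {j : ℕ}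
    (hj : (p (Fin.ofNat (n + 1) (m + 1)) : ℕ) = j) :
    ∀ x : Fin (n + 1), m < (x : ℕ) →
      ((braidToPerm n (ascWord n j (m + 1)))⁻¹ * p) x = x := by
  have hjm : j ≤ m + 1 := hj ▸ val_apply_le_of_forall_gt hp (val_ofNat_succ hm).le
  intro x hx
  rw [Equiv.Perm.mul_apply, Equiv.Perm.inv_eq_iff_eq]
  refine Fin.ext ?_
  rw [braidToPerm_ascWord_apply hjm (by omega)]
  rcases (by omega : (x : ℕ) = m + 1 ∨ m + 1 < (x : ℕ)) with h | h
  · rw [if_pos h, ← hj,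
      show x = Fin.ofNat (n + 1) (m + 1) from Fin.ext (by rw [h, val_ofNat_succ hm])]
  · rw [hp x h, if_neg (by omega), if_neg (by omega)]

lemma permSection_sgen_mul {m k : ℕ} (hkm : k ≤ m) {p : Equiv.Perm (Fin (n + 1))}
    (hj : (p (Fin.ofNat (n + 1) (m + 1)) : ℕ) = k + 1) :
    permSection n (m + 1) (braidToPerm n (sgen n k) * p) = sgen n k * permSection n (m + 1) p := by
  have hj' : ((braidToPerm n (sgen n k) * p) (Fin.ofNat (n + 1) (m + 1)) : ℕ) = k := by
    rw [Equiv.Perm.mul_apply, braidToPerm_sgen_apply_val (by omega), hj]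
    simp
  have hword : ascWord n k (m + 1) = sgen n k * ascWord n (k + 1) (m + 1) :=
    ascWord_eq_sgen_mul (by omega)
  rw [permSection_succ hj', permSection_succ hj, hword, map_mul, mul_inv_rev]
  simp only [mul_assoc, inv_mul_cancel_left]

lemma mk_sgen_mul_permSection_succ_of_mul_eq {m k k' j : ℕ} {p : Equiv.Perm (Fin (n + 1))}
    (hj : (p (Fin.ofNat (n + 1) (m + 1)) : ℕ) = j)
    (hτj : ((braidToPerm n (sgen n k) * p) (Fin.ofNat (n + 1) (m + 1)) : ℕ) = j)
    (hshift : sgen n k * ascWord n j (m + 1) = ascWord n j (m + 1) * sgen n k')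
    (ih : ((sgen n k' * permSection n m ((braidToPerm n (ascWord n j (m + 1)))⁻¹ * p) :
        BraidGroup n) : BraidGroup n ⧸ artinSubgroup n) =
      permSection n m
        (braidToPerm n (sgen n k') * ((braidToPerm n (ascWord n j (m + 1)))⁻¹ * p))) :
    ((sgen n k * permSection n (m + 1) p : BraidGroup n) : BraidGroup n ⧸ artinSubgroup n) =
      permSection n (m + 1) (braidToPerm n (sgen n k) * p) := by
  have hW : (braidToPerm n (ascWord n j (m + 1)))⁻¹ * braidToPerm n (sgen n k) =
      braidToPerm n (sgen n k') * (braidToPerm n (ascWord n j (m + 1)))⁻¹ := by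
    have := congrArg (braidToPerm n) hshift
    rw [map_mul, map_mul] at this
    rw [inv_mul_eq_iff_eq_mul, ← mul_assoc, ← this, mul_inv_cancel_right]
  rw [permSection_succ hτj, permSection_succ hj, ← mul_assoc, hshift, mul_assoc,
    QuotientGroup.mk_mul _ (ascWord n _ _), ih, ← QuotientGroup.mk_mul]
  simp only [← mul_assoc, hW]

lemma mk_sgen_mul_permSection : ∀ {m : ℕ}, m ≤ n → ∀ {k : ℕ}, k < m →
    ∀ {p : Equiv.Perm (Fin (n + 1))}, (∀ x : Fin (n + 1), m < (x : ℕ) → p x = x) →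
    ((sgen n k * permSection n m p : BraidGroup n) : BraidGroup n ⧸ artinSubgroup n) =
      permSection n m (braidToPerm n (sgen n k) * p)
  | 0, _, _, hk, _, _ => absurd hk (Nat.not_lt_zero _)
  | m + 1, hm, k, hk, p, hp => by
    set j := (p (Fin.ofNat (n + 1) (m + 1)) : ℕ) with hj
    have hjm : j ≤ m + 1 := val_apply_le_of_forall_gt hp (val_ofNat_succ hm).le
    have hq := inv_braidToPerm_ascWord_mul_apply hm hp hj.symm
    have hτj : ((braidToPerm n (sgen n k) * p) (Fin.ofNat (n + 1) (m + 1)) : ℕ) =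
        if j = k then k + 1 else if j = k + 1 then k else j :=
      braidToPerm_sgen_apply_val (by omega) _
    rcases (by omega : j = k + 1 ∨ j = k ∨ k + 2 ≤ j ∨ j < k) with h | h | h | h
    · rw [permSection_sgen_mul (by omega) h]
    · have hτ : braidToPerm n (sgen n k) * (braidToPerm n (sgen n k) * p) = p := by
        rw [← mul_assoc, ← sq, braidToPerm_sgen_sq, one_mul]
      have := permSection_sgen_mul (m := m) (k := k) (p := braidToPerm n (sgen n k) * p)
        (by omega) (by rw [hτj, if_pos h])
      rw [hτ] at this
      rw [this, ← mul_assoc, ← sq, QuotientGroup.mk_mul,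
        (QuotientGroup.eq_one_iff _).mpr (sgen_sq_mem_artinSubgroup (by omega)), one_mul]
    · exact mk_sgen_mul_permSection_succ_of_mul_eq hj.symm
        (hτj.trans (by rw [if_neg (by omega), if_neg (by omega)]))
        (commute_sgen_ascWord fun l hl _ => commute_sgen (by omega)).eq
        (mk_sgen_mul_permSection (by omega) (by omega) hq)
    · obtain ⟨k, rfl⟩ : ∃ k', k = k' + 1 := ⟨k - 1, by omega⟩
      exact mk_sgen_mul_permSection_succ_of_mul_eq hj.symm
        (hτj.trans (by rw [if_neg (by omega), if_neg (by omega)]))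
        (sgen_succ_mul_ascWord (by omega) (by omega) (by omega))
        (mk_sgen_mul_permSection (by omega) (by omega) hq)

lemma mk_eq_mk_permSection (g : BraidGroup n) :
    (g : BraidGroup n ⧸ artinSubgroup n) = permSection n n (braidToPerm n g) := by
  have mul_left (k : ℕ) (g : BraidGroup n) (hk : k < n)
      (ih : (g : BraidGroup n ⧸ artinSubgroup n) = permSection n n (braidToPerm n g)) :
      ((sgen n k * g : BraidGroup n) : BraidGroup n ⧸ artinSubgroup n) =
        permSection n n (braidToPerm n (sgen n k * g)) := by
    rw [QuotientGroup.mk_mul, ih, ← QuotientGroup.mk_mul, map_mul,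
      mk_sgen_mul_permSection le_rfl hk fun x hx => absurd x.isLt (by omega)]
  induction g using braidGroup_closure_induction with
  | one => rw [map_one, permSection_one n le_rfl]
  | mul_left k g hk ih => exact mul_left k g hk ih
  | inv_mul_left k g hk ih =>
    have hsq := sgen_sq_mem_artinSubgroup hk
    have h : (sgen n k)⁻¹ * g = (sgen n k ^ 2)⁻¹ * (sgen n k * g) := by rw [sq]; group
    rw [h, QuotientGroup.mk_mul, (QuotientGroup.eq_one_iff _).mpr (inv_mem hsq), one_mul,
      map_mul, map_inv, artinSubgroup_le_pureBraidGroup hsq, inv_one, one_mul]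
    exact mul_left k g hk ih

theorem pureBraidGroup_eq_artinSubgroup : PureBraidGroup n = artinSubgroup n := by
  refine le_antisymm (fun g hg => ?_) artinSubgroup_le_pureBraidGroup
  rw [← QuotientGroup.eq_one_iff, mk_eq_mk_permSection, MonoidHom.mem_ker.mp hg,
    permSection_one n le_rfl]
  rfl

lemma closure_pureGen :
    Subgroup.closure {x | ∃ a b, a < b ∧ b ≤ n ∧ pureGen n a b = x} =
      (⊤ : Subgroup (PureBraidGroup n)) := by
  apply Subgroup.map_injective (PureBraidGroup n).subtype_injective
  have himage :
      (PureBraidGroup n).subtype '' {x | ∃ a b, a < b ∧ b ≤ n ∧ pureGen n a b = x} =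
      {g | ∃ a b, a < b ∧ b ≤ n ∧ Agen n a b = g} := by
    ext g
    constructor
    · rintro ⟨_, ⟨a, b, hab, hb, rfl⟩, rfl⟩
      exact ⟨a, b, hab, hb, rfl⟩
    · rintro ⟨a, b, hab, hb, rfl⟩
      exact ⟨pureGen n a b, ⟨a, b, hab, hb, rfl⟩, rfl⟩
  rw [MonoidHom.map_closure, himage, ← MonoidHom.range_eq_map, Subgroup.range_subtype,
    ← artinSubgroup, pureBraidGroup_eq_artinSubgroup]

theorem PureBraidGroup.hom_ext {M : Type*} [Monoid M] {f g : PureBraidGroup n →* M}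
    (h : ∀ a b, a < b → b ≤ n → f (pureGen n a b) = g (pureGen n a b)) : f = g :=
  MonoidHom.eq_of_eqOn_dense closure_pureGen fun _ ⟨a, b, hab, hb, hx⟩ => hx ▸ h a b hab hb

end NormalForm

section Crossings

variable (n) in
/-- The left component counts crossings for each ordered pair of strands; on pure braids the
`(u, v)` and `(v, u)` entries both equal the linking number of the strands `u` and `v`. -/
def crossingHom :
    BraidGroup n →* (Fin (n + 1) × Fin (n + 1) → Multiplicative ℤ) ⋊[mulAutArrow]
      Equiv.Perm (Fin (n + 1)) :=
  PresentedGroup.toGroup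
    (f := fun i => ⟨Pi.mulSingle (i.castSucc, i.succ) (ofAdd 1), Equiv.swap i.castSucc i.succ⟩)
    (by
    have hperm (i : Fin n) : Equiv.swap i.castSucc i.succ = braidToPerm n (sgen n i) := by
      rw [braidToPerm_sgen i.isLt]; rfl
    rintro r (⟨i, j, hij, rfl⟩ | ⟨i, j, hij, rfl⟩) <;>
      simp only [map_mul, map_inv, FreeGroup.lift_apply_of, mul_inv_eq_one] <;>
      ext : 1 <;>
      simp only [SemidirectProduct.mul_left, SemidirectProduct.mul_right, mulAutArrow_mulSingle,
        map_mul, MulAut.mul_apply]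
    · have hb : j.castSucc = i.succ :=
        Fin.ext (by simp only [Fin.val_castSucc, Fin.val_succ]; omega)
      have hab : i.castSucc ≠ i.succ :=
        Fin.ne_of_val_ne (by simp only [Fin.val_castSucc, Fin.val_succ]; omega)
      have had : i.castSucc ≠ j.succ :=
        Fin.ne_of_val_ne (by simp only [Fin.val_castSucc, Fin.val_succ]; omega)
      have hbd : i.succ ≠ j.succ := Fin.ne_of_val_ne (by simp only [Fin.val_succ]; omega)
      simp only [hb, Equiv.swap_apply_left, Equiv.swap_apply_right,
        Equiv.swap_apply_of_ne_of_ne hab had, Equiv.swap_apply_of_ne_of_ne had.symm hbd.symm]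
      simp only [mul_comm, mul_left_comm]
    · simpa only [hperm, map_mul, show (j : ℕ) = i + 1 from hij.symm] using
        congrArg (braidToPerm n) (sgen_braid (n := n) (k := i) (by omega))
    · have hne {x y : Fin n} (h : (x : ℕ) + 2 ≤ y) : x.castSucc ≠ y.castSucc ∧
          x.castSucc ≠ y.succ ∧ x.succ ≠ y.castSucc ∧ x.succ ≠ y.succ := by
        simp only [ne_eq, Fin.ext_iff, Fin.val_castSucc, Fin.val_succ]; omega
      obtain ⟨h₁, h₂, h₃, h₄⟩ := hne hij
      rw [Equiv.swap_apply_of_ne_of_ne h₁.symm h₃.symm,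
        Equiv.swap_apply_of_ne_of_ne h₂.symm h₄.symm, Equiv.swap_apply_of_ne_of_ne h₁ h₂,
        Equiv.swap_apply_of_ne_of_ne h₃ h₄]
      exact mul_comm _ _
    · simpa only [hperm, map_mul] using ((commute_sgen hij).map (braidToPerm n)).eq)

def crossing (g : BraidGroup n) : Fin (n + 1) × Fin (n + 1) → Multiplicative ℤ :=
  (crossingHom n g).left

lemma crossingHom_right (g : BraidGroup n) : (crossingHom n g).right = braidToPerm n g := by
  have h : SemidirectProduct.rightHom.comp (crossingHom n) = braidToPerm n := by
    ext
    simp [crossingHom, braidToPerm]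
  exact DFunLike.congr_fun h g

lemma crossing_one : crossing (1 : BraidGroup n) = 1 := by
  rw [crossing, map_one, SemidirectProduct.one_left]

lemma crossing_mul (g h : BraidGroup n) :
    crossing (g * h) = crossing g * mulAutArrow (braidToPerm n g) (crossing h) := by
  rw [crossing, map_mul, SemidirectProduct.mul_left, crossingHom_right]
  rfl

lemma crossing_conj (g : BraidGroup n) {u : BraidGroup n} (hu : braidToPerm n u = 1) :
    crossing (g * u * g⁻¹) = mulAutArrow (braidToPerm n g) (crossing u) := by
  have hinv : crossing g * mulAutArrow (braidToPerm n g) (crossing g⁻¹) = 1 := by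
    rw [← crossing_mul, mul_inv_cancel, crossing_one]
  rw [crossing_mul, crossing_mul, map_mul, hu, mul_one, mul_right_comm, hinv, one_mul]

lemma crossing_sgen {k : ℕ} (hk : k < n) :
    crossing (sgen n k) = Pi.mulSingle (⟨k, by omega⟩, ⟨k + 1, by omega⟩) (ofAdd 1) := by
  rw [sgen, dif_pos hk, crossing, braidGen, crossingHom, PresentedGroup.toGroup.of]
  rfl

lemma braidToPerm_conjWord_apply {a b : ℕ} (hab : a < b) (hb : b ≤ n) :
    braidToPerm n (conjWord n a b) ⟨a, by omega⟩ = ⟨a, by omega⟩ ∧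
      braidToPerm n (conjWord n a b) ⟨a + 1, by omega⟩ = ⟨b, by omega⟩ := by
  induction b, hab using Nat.le_induction with
  | base => simp [conjWord_of_le]
  | succ b hab ih =>
    obtain ⟨ih₁, ih₂⟩ := ih (by omega)
    rw [conjWord_succ hab, map_mul, Equiv.Perm.mul_apply, Equiv.Perm.mul_apply, ih₁, ih₂,
      braidToPerm_sgen (by omega : b < n)]
    exact ⟨Equiv.swap_apply_of_ne_of_ne (Fin.ne_of_val_ne (by simp only; omega))
      (Fin.ne_of_val_ne (by simp only; omega)), Equiv.swap_apply_left _ _⟩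

lemma crossing_Agen {a b : ℕ} (hab : a < b) (hb : b ≤ n) :
    crossing (Agen n a b) = Pi.mulSingle (⟨a, by omega⟩, ⟨b, by omega⟩) (ofAdd 1) *
      Pi.mulSingle (⟨b, by omega⟩, ⟨a, by omega⟩) (ofAdd 1) := by
  have hsq : crossing (sgen n a ^ 2) =
      Pi.mulSingle (⟨a, by omega⟩, ⟨a + 1, by omega⟩) (ofAdd 1) *
      Pi.mulSingle (⟨a + 1, by omega⟩, ⟨a, by omega⟩) (ofAdd 1) := by
    rw [sq, crossing_mul, crossing_sgen (by omega), braidToPerm_sgen (by omega),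
      mulAutArrow_mulSingle, Equiv.swap_apply_left, Equiv.swap_apply_right]
  obtain ⟨h₁, h₂⟩ := braidToPerm_conjWord_apply (n := n) hab hb
  rw [Agen, crossing_conj _ (braidToPerm_sgen_sq n a ▸ map_pow _ _ _), hsq, map_mul,
    mulAutArrow_mulSingle, mulAutArrow_mulSingle, h₁, h₂]

variable (n) in
def pureCrossing : PureBraidGroup n →* (Fin (n + 1) × Fin (n + 1) → Multiplicative ℤ) where
  toFun x := crossing (x : BraidGroup n)
  map_one' := crossing_one
  map_mul' x y := by
    rw [Subgroup.coe_mul, crossing_mul, MonoidHom.mem_ker.mp x.2, map_one, MulAut.one_apply]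

lemma crossing_ascWord_zero {m : ℕ} (hm : m ≤ n) :
    crossing (ascWord n 0 m) = fun p =>
      if (p.1 : ℕ) = 0 ∧ 0 < (p.2 : ℕ) ∧ (p.2 : ℕ) ≤ m then ofAdd 1 else 1 := by
  induction m with
  | zero =>
    funext p
    rw [ascWord_of_le le_rfl, crossing_one, if_neg (by omega)]
    rfl
  | succ m ih =>
    have hm₀ : braidToPerm n (ascWord n 0 m) ⟨m, by omega⟩ = 0 :=
      Fin.ext (by rw [braidToPerm_ascWord_apply (Nat.zero_le m) (by omega)]; simp)
    have hm₁ : braidToPerm n (ascWord n 0 m) ⟨m + 1, by omega⟩ = ⟨m + 1, by omega⟩ :=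
      Fin.ext (by rw [braidToPerm_ascWord_apply (Nat.zero_le m) (by omega)]; simp)
    rw [ascWord_succ (Nat.zero_le m), crossing_mul, ih (by omega), crossing_sgen (by omega),
      mulAutArrow_mulSingle, hm₀, hm₁]
    funext p
    simp only [Pi.mul_apply, Pi.mulSingle_apply, Prod.ext_iff, Fin.ext_iff, Fin.val_zero]
    split_ifs <;> first | rfl | omega

lemma fullTwist_eq_pow : fullTwist n = ascWord n 0 n ^ (n + 1) := by
  rw [fullTwist, ascWord, Nat.sub_zero]
  congr 2
  refine List.ext_getElem (by simp) fun k h₁ h₂ => ?_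
  rw [List.getElem_ofFn, List.getElem_map, List.getElem_range', braidGen_eq_sgen, zero_add, one_mul]

lemma braidToPerm_ascWord_pow_apply_zero {r : ℕ} (hr : r ≤ n) :
    ((braidToPerm n (ascWord n 0 n) ^ r) 0 : ℕ) = r := by
  induction r with
  | zero => rfl
  | succ r ih =>
    rw [pow_succ', Equiv.Perm.mul_apply, braidToPerm_ascWord_apply (Nat.zero_le n) le_rfl,
      ih (by omega), if_neg (by omega), if_pos (by omega)]

lemma crossing_ascWord_pow {r : ℕ} (hr : r ≤ n + 1) :
    crossing (ascWord n 0 n ^ r) = fun p =>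
      if (p.1 : ℕ) < r ∧ p.1 ≠ p.2 then ofAdd 1 else 1 := by
  induction r with
  | zero =>
    funext p
    rw [pow_zero, crossing_one, if_neg (by omega)]
    rfl
  | succ r ih =>
    rw [pow_succ, crossing_mul, ih (by omega), map_pow, crossing_ascWord_zero le_rfl]
    set g := braidToPerm n (ascWord n 0 n) ^ r
    have hg (x : Fin (n + 1)) : (g⁻¹ x : ℕ) = 0 ↔ (x : ℕ) = r := by
      rw [← braidToPerm_ascWord_pow_apply_zero (n := n) (r := r) (by omega), ← Fin.ext_iff,
        ← Equiv.Perm.inv_eq_iff_eq, Fin.ext_iff, Fin.val_zero]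
    funext p
    have h₁ := hg p.1
    have h₂ := hg p.2
    have := (g⁻¹ p.2).isLt
    simp only [Pi.mul_apply, mulAutArrow_apply_prod, Fin.ne_iff_vne]
    split_ifs <;> first | rfl | omega

lemma crossing_fullTwist :
    crossing (fullTwist n) = fun p => if p.1 ≠ p.2 then ofAdd 1 else 1 := by
  rw [fullTwist_eq_pow, crossing_ascWord_pow le_rfl]
  funext p
  simp only [p.1.isLt, true_and]

end Crossings

section Center

lemma ascWord_pow_mul_sgen {j k : ℕ} (h : k + j < n) :
    ascWord n 0 n ^ j * sgen n k = sgen n (k + j) * ascWord n 0 n ^ j := by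
  induction j generalizing k with
  | zero => simp
  | succ j ih =>
    rw [pow_succ, mul_assoc, ← sgen_succ_mul_ascWord (Nat.zero_le k) (by omega) (by omega),
      ← mul_assoc, ih (by omega), mul_assoc, ← pow_succ, add_right_comm, add_assoc]

lemma ascWord_sq_mul_sgen {l : ℕ} (hl : l < n) :
    ascWord n 0 (l + 1) ^ 2 * sgen n l = sgen n 0 * ascWord n 0 (l + 1) ^ 2 := by
  have h₁ := ascWord_conj_sgen (n := n) (Nat.zero_le l) hl
  have h₂ : ascWord n 0 (l + 1) = ascWord n 0 l * sgen n l := ascWord_succ (Nat.zero_le l)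
  have h₃ : ascWord n 0 (l + 1) = sgen n 0 * ascWord n 1 (l + 1) := ascWord_eq_sgen_mul (by omega)
  have e₁ : ascWord n 0 (l + 1) * sgen n l =
      (ascWord n 1 (l + 1))⁻¹ * sgen n 0 * ascWord n 1 (l + 1) * ascWord n 0 (l + 1) := by
    rw [← h₁, h₂]; group
  have e₂ : ascWord n 0 (l + 1) * ((ascWord n 1 (l + 1))⁻¹ * sgen n 0 * ascWord n 1 (l + 1)) =
      sgen n 0 * ascWord n 0 (l + 1) := by
    rw [h₃]; group
  calc ascWord n 0 (l + 1) ^ 2 * sgen n l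
      = ascWord n 0 (l + 1) * ((ascWord n 1 (l + 1))⁻¹ * sgen n 0 * ascWord n 1 (l + 1)) *
          ascWord n 0 (l + 1) := by
        rw [sq, mul_assoc, e₁]; simp only [mul_assoc]
    _ = sgen n 0 * ascWord n 0 (l + 1) ^ 2 := by rw [e₂, sq, mul_assoc]

lemma commute_fullTwist_sgen {k : ℕ} (hk : k < n) : Commute (fullTwist n) (sgen n k) := by
  obtain ⟨l, rfl⟩ : ∃ l, n = k + l + 1 := ⟨n - k - 1, by omega⟩
  have hsplit : fullTwist (k + l + 1) =
      ascWord (k + l + 1) 0 (k + l + 1) ^ k * ascWord (k + l + 1) 0 (k + l + 1) ^ 2 *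
        ascWord (k + l + 1) 0 (k + l + 1) ^ l := by
    rw [fullTwist_eq_pow, ← pow_add, ← pow_add]
    congr 1
    omega
  have h₁ := ascWord_pow_mul_sgen (n := k + l + 1) (j := l) (k := k) (by omega)
  have h₂ := ascWord_sq_mul_sgen (n := k + l + 1) (l := k + l) (by omega)
  have h₃ := ascWord_pow_mul_sgen (n := k + l + 1) (j := k) (k := 0) (by omega)
  rw [zero_add] at h₃
  rw [Commute, SemiconjBy, hsplit, mul_assoc, h₁, ← mul_assoc, mul_assoc _ (_ ^ 2), h₂,
    ← mul_assoc, h₃]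
  group

lemma fullTwist_mem_center : fullTwist n ∈ Subgroup.center (BraidGroup n) := by
  refine Subgroup.mem_center_iff.mpr fun g => ?_
  induction g using braidGroup_closure_induction with
  | one => simp
  | mul_left k g hk ih =>
    rw [mul_assoc, ih, ← mul_assoc, ← (commute_fullTwist_sgen hk).eq, mul_assoc]
  | inv_mul_left k g hk ih =>
    rw [mul_assoc, ih, ← mul_assoc, ← (commute_fullTwist_sgen hk).inv_right.eq, mul_assoc]

lemma pureTwist_mem_center : pureTwist n ∈ Subgroup.center (PureBraidGroup n) :=
  Subgroup.mem_center_iff.mpr fun g =>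
    Subtype.ext (Subgroup.mem_center_iff.mp fullTwist_mem_center g.1)

lemma pureTwist_ne_one (hn : 1 ≤ n) : pureTwist n ≠ 1 := by
  intro h
  have h' := congrFun (crossing_fullTwist (n := n)) (⟨0, by omega⟩, ⟨1, by omega⟩)
  rw [show fullTwist n = 1 from congrArg Subtype.val h, crossing_one, if_pos (by simp)] at h'
  exact absurd (congrArg toAdd h') (by simp)

end Center

section TransvectionExponent

def upperWeight (t : ℕ → ℕ → ℤ) (p : Fin (n + 1) × Fin (n + 1)) : ℤ :=
  if (p.1 : ℕ) < p.2 then t p.1 p.2 else 0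

lemma sum_upperWeight (t : ℕ → ℕ → ℤ) :
    ∑ p, upperWeight (n := n) t p =
      ∑ b ∈ Finset.range (n + 1), ∑ a ∈ Finset.range b, t a b := by
  rw [Fintype.sum_prod_type_right, ← Fin.sum_univ_eq_sum_range]
  simp only [upperWeight]
  refine Finset.sum_congr rfl fun b _ => ?_
  rw [Fin.sum_univ_eq_sum_range (fun a => if a < (b : ℕ) then t a b else 0),
    ← Finset.sum_filter]
  congr 1
  ext a
  simp only [Finset.mem_filter, Finset.mem_range]
  omega

variable (n) in
def transvectionExponent (t : ℕ → ℕ → ℤ) : PureBraidGroup n →* Multiplicative ℤ :=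
  (weightedSum (upperWeight t)).comp (pureCrossing n)

lemma transvectionExponent_pureGen (t : ℕ → ℕ → ℤ) {a b : ℕ} (hab : a < b)
    (hb : b ≤ n) :
    transvectionExponent n t (pureGen n a b) = ofAdd (t a b) := by
  simp only [transvectionExponent, MonoidHom.comp_apply]
  change weightedSum _ (crossing (Agen n a b)) = _
  rw [crossing_Agen hab hb, map_mul, weightedSum_mulSingle, weightedSum_mulSingle, upperWeight,
    upperWeight]
  simp [hab, hab.not_gt]

lemma transvectionExponent_pureTwist (t : ℕ → ℕ → ℤ) :
    transvectionExponent n t (pureTwist n) =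
      ofAdd (∑ b ∈ Finset.range (n + 1), ∑ a ∈ Finset.range b, t a b) := by
  simp only [transvectionExponent, MonoidHom.comp_apply]
  change weightedSum _ (crossing (fullTwist n)) = _
  rw [crossing_fullTwist, ← sum_upperWeight]
  refine congrArg ofAdd (Finset.sum_congr rfl fun p _ => ?_)
  by_cases h : p.1 = p.2
  · simp [h, upperWeight]
  · simp [h]

end TransvectionExponent

end Braids

/-- For `n ≥ 3` and any family of integers `t_{a,b}` (indexed here by
`0 ≤ a < b ≤ n`, corresponding to the classical indices `1 ≤ i < j ≤ n+1`), there is a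
unique endomorphism `ρ` of the pure braid group `P_{n+1}` with
`ρ(A_{a,b}) = A_{a,b} z^{t_{a,b}}` for all pairs, and `ρ` is injective if and only if
`1 + Σ t_{a,b} ≠ 0`. -/
theorem pureBraid_transvection_endomorphism
    (n : ℕ) (hn : 3 ≤ n) (t : ℕ → ℕ → ℤ) :
    (∃! ρ : ↥(PureBraidGroup n) →* ↥(PureBraidGroup n),
        ∀ a b : ℕ, a < b → b ≤ n →
          ρ (pureGen n a b) = pureGen n a b * pureTwist n ^ t a b) ∧
    (∀ ρ : ↥(PureBraidGroup n) →* ↥(PureBraidGroup n),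
        (∀ a b : ℕ, a < b → b ≤ n →
          ρ (pureGen n a b) = pureGen n a b * pureTwist n ^ t a b) →
        (Function.Injective ρ ↔
          1 + ∑ b ∈ Finset.range (n + 1), ∑ a ∈ Finset.range b, t a b ≠ 0)) := by
  set ρ₀ := transvection pureTwist_mem_center (transvectionExponent n t)
  have hρ₀ (a b : ℕ) (hab : a < b) (hb : b ≤ n) :
      ρ₀ (pureGen n a b) = pureGen n a b * pureTwist n ^ t a b := by
    rw [transvection_apply, transvectionExponent_pureGen t hab hb, toAdd_ofAdd]
  have huniq (ρ : PureBraidGroup n →* PureBraidGroup n)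
      (hρ : ∀ a b, a < b → b ≤ n →
        ρ (pureGen n a b) = pureGen n a b * pureTwist n ^ t a b) :
      ρ = ρ₀ :=
    PureBraidGroup.hom_ext fun a b hab hb => (hρ a b hab hb).trans (hρ₀ a b hab hb).symm
  refine ⟨⟨ρ₀, hρ₀, huniq⟩, fun ρ hρ => ?_⟩
  rw [huniq ρ hρ, transvection_injective_iff _ _ (pureTwist_ne_one (by omega)),
    transvectionExponent_pureTwist, toAdd_ofAdd]
end
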